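/- arXiv:1409.0399 — 2 statements merged into one kernel-verified Lean document; each statement's English description precedes it below -/
import Mathlib

section
/- Let k₁ and k₂ be polygonal knots in ℝ³ and suppose there exists a polygonal homeomorphism φ : k₁ → k₂ satisfying: (1) p(φ(x)) = p(x) for every x ∈ k₁; and (2) whenever x, y ∈ k₁ with x ≠ y and p(x) = p(y), one has (h(x) − h(y))·(h(φ(x)) − h(φ(y))) > 0. Then k₁ and k₂ are ambient isotopic. -/
/-!
Both knots are moved only vertically. Condition (2) says that `height ∘ φ` is monotone on each
vertical line through `k₁`, and `height ∘ φ⁻¹` on each vertical line through `k₂`. Such functions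
extend to bounded continuous functions `F₁`, `F₂` on `ℝ³` that are monotone on every vertical line
(a McShane-type inf-convolution for the asymmetric distance `|p x - p y| + (h x - h y)⁺`, composed
with a modulus of continuity). The vertical shears `Sᵢ,t (x) = (p x, h x + t Fᵢ x)`, `t ∈ [0, 1]`,
are then homeomorphisms of `ℝ³`, and `H_t = S₂,t⁻¹ ∘ S₁,t` is an ambient isotopy: for `x ∈ k₁`,
`S₁,₁ x = (p x, h x + h (φ x)) = S₂,₁ (φ x)`, so `H₁ = φ` on `k₁`.
-/

open Set

/-- The ambient 3-space, `ℝ³`, modeled as `ℝ × ℝ × ℝ`. -/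
abbrev E3 : Type := ℝ × ℝ × ℝ

/-- A knot in `ℝ³`: a subset homeomorphic to the circle. -/
def IsKnot (k : Set E3) : Prop := Nonempty (k ≃ₜ Circle)

/-- A polygonal knot: a knot which is a union of finitely many straight line segments. -/
def IsPolygonalKnot (k : Set E3) : Prop :=
  IsKnot k ∧ ∃ S : Finset (E3 × E3), k = ⋃ p ∈ S, segment ℝ p.1 p.2

/-- Ambient isotopy of subsets of `ℝ³`. -/
def AmbientIsotopic (k₁ k₂ : Set E3) : Prop :=
  ∃ H : (Icc (0:ℝ) 1) × E3 → E3,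
    Continuous H ∧
    (∀ t : Icc (0:ℝ) 1, IsHomeomorph fun x => H (t, x)) ∧
    (∀ x, H (⟨0, by simp⟩, x) = x) ∧
    (fun x => H (⟨1, by simp⟩, x)) '' k₁ = k₂

/-- `A` is iteratively injective with respect to `g` if every iterate `gⁿ` is injective on `A`. -/
def IterativelyInjective (g : E3 → E3) (A : Set E3) : Prop :=
  ∀ n : ℕ, Set.InjOn (g^[n]) A

/-- The projection `p(x,y,z) = (x,y)`. -/
def projXY : E3 → ℝ × ℝ := fun p => (p.1, p.2.1)

/-- The height function `h(x,y,z) = z`. -/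
def height : E3 → ℝ := fun p => p.2.2

noncomputable section

open Filter Topology Function

structure IsModulus (ω : ℝ → ℝ) : Prop where
  map_zero : ω 0 = 0
  monotoneOn : MonotoneOn ω (Ici 0)
  le_add : ∀ ⦃s t : ℝ⦄, 0 ≤ s → 0 ≤ t → ω (s + t) ≤ ω s + ω t
  tendsto_zero : Tendsto ω (𝓝[≥] 0) (𝓝 0)

namespace IsModulus

variable {ω : ℝ → ℝ} (hω : IsModulus ω)
include hω

lemma nonneg {t : ℝ} (ht : 0 ≤ t) : 0 ≤ ω t :=
  hω.map_zero ▸ hω.monotoneOn self_mem_Ici ht ht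

lemma le_add_of_le {a b c : ℝ} (ha : 0 ≤ a) (hb : 0 ≤ b) (hc : 0 ≤ c) (h : c ≤ a + b) :
    ω c ≤ ω a + ω b :=
  (hω.monotoneOn hc (add_nonneg ha hb) h).trans (hω.le_add ha hb)

lemma tendsto_comp {β : Type*} {l : Filter β} {g : β → ℝ} (hg : Tendsto g l (𝓝 0))
    (hg0 : ∀ᶠ y in l, 0 ≤ g y) : Tendsto (ω ∘ g) l (𝓝 0) :=
  hω.tendsto_zero.comp (tendsto_nhdsWithin_iff.2 ⟨hg, hg0⟩)

end IsModulus

def affineInf (P : Set (ℝ × ℝ)) (t : ℝ) : ℝ := ⨅ p : P, p.1.1 + p.1.2 * t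

section AffineInf

variable {P : Set (ℝ × ℝ)} (hP : P ⊆ Ioi 0 ×ˢ Ici 0)
include hP

lemma bddBelow_range_affine {t : ℝ} (ht : 0 ≤ t) :
    BddBelow (range fun p : P => p.1.1 + p.1.2 * t) := by
  refine ⟨0, ?_⟩
  rintro _ ⟨⟨p, hp⟩, rfl⟩
  exact add_nonneg (hP hp).1.le (mul_nonneg (hP hp).2 ht)

lemma affineInf_le {p : ℝ × ℝ} (hp : p ∈ P) {t : ℝ} (ht : 0 ≤ t) :
    affineInf P t ≤ p.1 + p.2 * t :=
  ciInf_le (bddBelow_range_affine hP ht) ⟨p, hp⟩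

lemma affineInf_nonneg (hne : P.Nonempty) {t : ℝ} (ht : 0 ≤ t) : 0 ≤ affineInf P t := by
  have := hne.to_subtype
  exact le_ciInf fun ⟨p, hp⟩ => add_nonneg (hP hp).1.le (mul_nonneg (hP hp).2 ht)

lemma isModulus_affineInf
    (hadd : ∀ p ∈ P, ∀ q ∈ P, (p.1 + q.1, min p.2 q.2) ∈ P)
    (hsmall : ∀ ε > 0, ∃ c, (ε, c) ∈ P) : IsModulus (affineInf P) := by
  have hne : P.Nonempty := let ⟨c, hc⟩ := hsmall 1 one_pos; ⟨_, hc⟩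
  have := hne.to_subtype
  have hsmall' : ∀ ε > 0, ∃ c, 0 ≤ c ∧ ∀ t, 0 ≤ t → affineInf P t ≤ ε + c * t := by
    intro ε hε
    obtain ⟨c, hc⟩ := hsmall ε hε
    exact ⟨c, (hP hc).2, fun t ht => affineInf_le hP hc ht⟩
  refine ⟨?_, ?_, ?_, ?_⟩
  · refine le_antisymm (le_of_forall_pos_le_add fun ε hε => ?_) (affineInf_nonneg hP hne le_rfl)
    obtain ⟨c, -, hc⟩ := hsmall' ε hε
    simpa using hc 0 le_rfl
  · intro s hs t _ hst
    refine ciInf_mono (bddBelow_range_affine hP hs) fun ⟨p, hp⟩ => ?_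
    have := (hP hp).2
    dsimp only
    gcongr
  · intro s t hs ht
    refine le_ciInf_add_ciInf fun ⟨p, hp⟩ ⟨q, hq⟩ => ?_
    have hmin : min p.2 q.2 * (s + t) ≤ p.2 * s + q.2 * t := by
      have := (hP hp).2; have := (hP hq).2
      rw [mul_add]
      gcongr
      exacts [min_le_left _ _, min_le_right _ _]
    calc affineInf P (s + t) ≤ (p.1 + q.1) + min p.2 q.2 * (s + t) :=
          affineInf_le hP (hadd p hp q hq) (add_nonneg hs ht)
      _ ≤ _ := by linarith
  · refine tendsto_order.2 ⟨fun a ha => ?_, fun b hb => ?_⟩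
    · filter_upwards [self_mem_nhdsWithin] with t ht
      exact ha.trans_le (affineInf_nonneg hP hne ht)
    · obtain ⟨c, -, hc⟩ := hsmall' (b / 2) (half_pos hb)
      have hlim : Tendsto (fun t => b / 2 + c * t) (𝓝[≥] 0) (𝓝 (b / 2)) := by
        have : Continuous fun t : ℝ => b / 2 + c * t := by fun_prop
        simpa using (this.tendsto 0).mono_left nhdsWithin_le_nhds
      filter_upwards [self_mem_nhdsWithin, hlim.eventually (gt_mem_nhds (half_lt_self hb))]
        with t ht hlt
      exact (hc t ht).trans_lt hlt

end AffineInf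

def affineBounds {α : Type*} (K : Set α) (f : α → ℝ) (ρ : α → α → ℝ) : Set (ℝ × ℝ) :=
  {p | 0 < p.1 ∧ 0 ≤ p.2 ∧ ∀ x ∈ K, ∀ y ∈ K, f x - f y ≤ p.1 + p.2 * ρ x y}

section Modulus

variable {α : Type*} {K : Set α} {f : α → ℝ} {ρ : α → α → ℝ}

lemma affineBounds_subset : affineBounds K f ρ ⊆ Ioi 0 ×ˢ Ici 0 :=
  fun _ hp => ⟨hp.1, hp.2.1⟩

lemma add_min_mem_affineBounds {p q : ℝ × ℝ} (hp : p ∈ affineBounds K f ρ)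
    (hq : q ∈ affineBounds K f ρ) (hρ : ∀ x y, 0 ≤ ρ x y) :
    (p.1 + q.1, min p.2 q.2) ∈ affineBounds K f ρ := by
  refine ⟨add_pos hp.1 hq.1, le_min hp.2.1 hq.2.1, fun x hx y hy => ?_⟩
  have hpxy := hp.2.2 x hx y hy
  have hqxy := hq.2.2 x hx y hy
  have := hp.1
  have := hq.1
  dsimp only
  rw [min_mul_of_nonneg _ _ (hρ x y)]
  rcases min_choice (p.2 * ρ x y) (q.2 * ρ x y) with h | h <;> rw [h] <;> linarith

/-- On the compact set where `ε ≤ f x - f y`, the function `ρ` is positive, hence at least some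
`m > 0`, while `f x - f y` is bounded there: a large slope `c` absorbs it. -/
lemma exists_mem_affineBounds [TopologicalSpace α] [T2Space α] (hK : IsCompact K)
    (hf : ContinuousOn f K)
    (hρ : Continuous (uncurry ρ)) (hρ0 : ∀ x y, 0 ≤ ρ x y)
    (hmono : ∀ x ∈ K, ∀ y ∈ K, ρ x y = 0 → f x ≤ f y) {ε : ℝ} (hε : 0 < ε) :
    ∃ c, (ε, c) ∈ affineBounds K f ρ := by
  have hdiff : ContinuousOn (fun q : α × α => f q.1 - f q.2) (K ×ˢ K) :=
    (hf.comp continuousOn_fst fun _ hq => hq.1).sub (hf.comp continuousOn_snd fun _ hq => hq.2)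
  set A := K ×ˢ K ∩ (fun q : α × α => f q.1 - f q.2) ⁻¹' Ici ε
  have hA : IsCompact A := (hK.prod hK).of_isClosed_subset
    (hdiff.preimage_isClosed_of_isClosed (hK.isClosed.prod hK.isClosed) isClosed_Ici)
    inter_subset_left
  have hρA : ∀ q ∈ A, 0 < uncurry ρ q := by
    rintro ⟨x, y⟩ ⟨⟨hx, hy⟩, hxy⟩
    refine (hρ0 x y).lt_of_ne fun h => ?_
    have := hmono x hx y hy h.symm
    simp only [mem_preimage, mem_Ici] at hxy
    linarith
  obtain ⟨m, hm, hmA⟩ := hA.exists_forall_le' hρ.continuousOn hρA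
  obtain ⟨C, hC⟩ := (hK.prod hK).exists_bound_of_continuousOn hdiff
  refine ⟨max C 0 / m, hε, by positivity, fun x hx y hy => ?_⟩
  by_cases hxy : ε ≤ f x - f y
  · have hC' : f x - f y ≤ max C 0 := (le_abs_self _).trans ((hC (x, y) ⟨hx, hy⟩).trans
      (le_max_left _ _))
    have : max C 0 ≤ max C 0 / m * ρ x y := by
      rw [div_mul_eq_mul_div, le_div_iff₀ hm]
      exact mul_le_mul_of_nonneg_left (hmA (x, y) ⟨⟨hx, hy⟩, hxy⟩) (le_max_right _ _)
    linarith
  · have : 0 ≤ max C 0 / m * ρ x y := mul_nonneg (by positivity) (hρ0 x y)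
    linarith

theorem exists_modulus_of_isCompact [TopologicalSpace α] [T2Space α] (hK : IsCompact K)
    (hf : ContinuousOn f K)
    (hρ : Continuous (uncurry ρ)) (hρ0 : ∀ x y, 0 ≤ ρ x y)
    (hmono : ∀ x ∈ K, ∀ y ∈ K, ρ x y = 0 → f x ≤ f y) :
    ∃ ω, IsModulus ω ∧ ∀ x ∈ K, ∀ y ∈ K, f x - f y ≤ ω (ρ x y) := by
  have hsmall := fun ε (hε : 0 < ε) => exists_mem_affineBounds hK hf hρ hρ0 hmono hε
  have : Nonempty (affineBounds K f ρ) := let ⟨_, hc⟩ := hsmall 1 one_pos; ⟨⟨_, hc⟩⟩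
  refine ⟨affineInf (affineBounds K f ρ), isModulus_affineInf affineBounds_subset
    (fun p hp q hq => add_min_mem_affineBounds hp hq hρ0) hsmall,
    fun x hx y hy => le_ciInf fun ⟨p, hp⟩ => hp.2.2 x hx y hy⟩

end Modulus

def infConv {α : Type*} (K : Set α) (f : α → ℝ) (d : α → α → ℝ) (x : α) : ℝ :=
  ⨅ y : K, f y + d x y

section InfConv

variable {α : Type*} {K : Set α} {f : α → ℝ} {d : α → α → ℝ}
  (hf : BddBelow (f '' K)) (hd : ∀ x y, 0 ≤ d x y)
include hf hd

lemma bddBelow_infConv_range (x : α) : BddBelow (range fun y : K => f y + d x y) := by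
  obtain ⟨b, hb⟩ := hf
  exact ⟨b, by rintro _ ⟨y, rfl⟩; linarith [hb (mem_image_of_mem f y.2), hd x y]⟩

lemma infConv_le (x : α) {y : α} (hy : y ∈ K) : infConv K f d x ≤ f y + d x y :=
  ciInf_le (bddBelow_infConv_range hf hd x) ⟨y, hy⟩

lemma infConv_mono {x x' : α} (h : ∀ y, d x y ≤ d x' y) : infConv K f d x ≤ infConv K f d x' :=
  ciInf_mono (bddBelow_infConv_range hf hd x) fun y => add_le_add_right (h y) _

lemma eqOn_infConv (hdx : ∀ x, d x x = 0) (hfd : ∀ x ∈ K, ∀ y ∈ K, f x ≤ f y + d x y) :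
    EqOn (infConv K f d) f K := fun x hx =>
  have : Nonempty K := ⟨⟨x, hx⟩⟩
  le_antisymm (by simpa [hdx] using infConv_le hf hd x hx) (le_ciInf fun y => hfd x hx y y.2)

variable (hne : K.Nonempty) (htri : ∀ x y z, d x z ≤ d x y + d y z)
include hne htri

lemma infConv_le_add (x x' : α) : infConv K f d x ≤ infConv K f d x' + d x x' := by
  have := hne.to_subtype
  refine sub_le_iff_le_add.1 (le_ciInf fun y => ?_)
  linarith [infConv_le hf hd x y.2, htri x x' y]

lemma continuous_infConv [TopologicalSpace α]
    (hd0 : ∀ x, Tendsto (d x) (𝓝 x) (𝓝 0) ∧ Tendsto (d · x) (𝓝 x) (𝓝 0)) :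
    Continuous (infConv K f d) := by
  refine continuous_iff_continuousAt.2 fun x => ?_
  have hlo := tendsto_const_nhds (x := infConv K f d x).sub (hd0 x).1
  have hhi := tendsto_const_nhds (x := infConv K f d x).add (hd0 x).2
  rw [sub_zero] at hlo
  rw [add_zero] at hhi
  exact tendsto_of_tendsto_of_tendsto_of_le_of_le hlo hhi
    (fun x' => sub_le_iff_le_add.2 (infConv_le_add hf hd hne htri x x'))
    (fun x' => infConv_le_add hf hd hne htri x' x)

end InfConv

def upDist {X : Type*} [PseudoMetricSpace X] (x y : X × ℝ) : ℝ :=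
  dist x.1 y.1 + max (x.2 - y.2) 0

section UpDist

variable {X : Type*} [PseudoMetricSpace X]

lemma upDist_nonneg (x y : X × ℝ) : 0 ≤ upDist x y :=
  add_nonneg dist_nonneg (le_max_right _ _)

@[simp]
lemma upDist_self (x : X × ℝ) : upDist x x = 0 := by
  simp [upDist]

lemma upDist_triangle (x y z : X × ℝ) : upDist x z ≤ upDist x y + upDist y z := by
  have := dist_triangle x.1 y.1 z.1
  have : max (x.2 - z.2) 0 ≤ max (x.2 - y.2) 0 + max (y.2 - z.2) 0 :=
    max_le (by linarith [le_max_left (x.2 - y.2) 0, le_max_left (y.2 - z.2) 0])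
      (add_nonneg (le_max_right _ _) (le_max_right _ _))
  unfold upDist
  linarith

lemma continuous_upDist : Continuous (uncurry (upDist (X := X))) := by
  unfold upDist
  fun_prop

lemma upDist_mono_left (a : X) {z z' : ℝ} (h : z ≤ z') (y : X × ℝ) :
    upDist (a, z) y ≤ upDist (a, z') y := by
  unfold upDist
  gcongr

lemma upDist_eq_zero {X : Type*} [MetricSpace X] {x y : X × ℝ} (h : upDist x y = 0) :
    x.1 = y.1 ∧ x.2 ≤ y.2 := by
  have h1 := dist_nonneg (x := x.1) (y := y.1)
  have h2 := le_max_right (x.2 - y.2) 0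
  have h3 := le_max_left (x.2 - y.2) 0
  unfold upDist at h
  exact ⟨dist_le_zero.1 (by linarith), by linarith⟩

end UpDist

theorem exists_continuous_monotone_extension {X : Type*} [MetricSpace X] {K : Set (X × ℝ)}
    (hK : IsCompact K) {f : X × ℝ → ℝ} (hf : ContinuousOn f K)
    (hmono : ∀ x ∈ K, ∀ y ∈ K, x.1 = y.1 → x.2 ≤ y.2 → f x ≤ f y) :
    ∃ F : X × ℝ → ℝ, Continuous F ∧ EqOn F f K ∧ (∀ a, Monotone fun z => F (a, z)) ∧
      ∃ A, ∀ p, |F p| ≤ A := by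
  rcases K.eq_empty_or_nonempty with rfl | hne
  · exact ⟨0, continuous_const, eqOn_empty _ _, fun _ _ _ _ => le_rfl, 0, by simp⟩
  obtain ⟨ω, hω, hfω⟩ := exists_modulus_of_isCompact hK hf continuous_upDist upDist_nonneg
    fun x hx y hy h => hmono x hx y hy (upDist_eq_zero h).1 (upDist_eq_zero h).2
  obtain ⟨M, hM⟩ := hK.exists_bound_of_continuousOn hf
  have hfM : ∀ x ∈ K, f x ∈ Icc (-M) M := fun x hx => abs_le.1 (hM x hx)
  -- `ω ∘ upDist` is an asymmetric distance for which `f` is 1-Lipschitz on `K`; it grows with the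
  -- height of its first argument, which makes `infConv K f d` monotone on vertical lines.
  set d : X × ℝ → X × ℝ → ℝ := fun x y => ω (upDist x y)
  have hbdd : BddBelow (f '' K) := ⟨-M, by rintro _ ⟨x, hx, rfl⟩; exact (hfM x hx).1⟩
  have hd : ∀ x y, 0 ≤ d x y := fun x y => hω.nonneg (upDist_nonneg x y)
  have htri : ∀ x y z, d x z ≤ d x y + d y z := fun x y z =>
    hω.le_add_of_le (upDist_nonneg x y) (upDist_nonneg y z) (upDist_nonneg x z)
      (upDist_triangle x y z)
  have hd0 : ∀ x, Tendsto (d x) (𝓝 x) (𝓝 0) ∧ Tendsto (d · x) (𝓝 x) (𝓝 0) := fun x => by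
    have hρ := continuous_upDist (X := X)
    refine ⟨hω.tendsto_comp ?_ (.of_forall (upDist_nonneg x)),
      hω.tendsto_comp ?_ (.of_forall (upDist_nonneg · x))⟩
    · simpa using (hρ.uncurry_left x).tendsto x
    · simpa using (hρ.uncurry_right x).tendsto x
  set G := infConv K f d
  have hGf : EqOn G f K := eqOn_infConv hbdd hd (fun x => by simp [d, hω.map_zero])
    fun x hx y hy => by linarith [hfω x hx y hy]
  refine ⟨fun p => max (-M) (min (G p) M), ?_, fun x hx => ?_, fun a z z' hz => ?_, M,
    fun p => abs_le.2 ⟨le_max_left _ _, max_le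
      ((hfM _ hne.some_mem).1.trans (hfM _ hne.some_mem).2) (min_le_right _ _)⟩⟩
  · have := continuous_infConv hbdd hd hne htri hd0
    fun_prop
  · simp [hGf hx, (hfM x hx).1, (hfM x hx).2]
  · have : G (a, z) ≤ G (a, z') := infConv_mono hbdd hd fun y =>
      hω.monotoneOn (upDist_nonneg _ y) (upDist_nonneg _ y) (upDist_mono_left a hz y)
    dsimp only
    gcongr

section Shear

variable {Z : Type*} [TopologicalSpace Z]

lemma continuous_of_strictMono_of_apply_eq {s : Z × ℝ → ℝ} (hs : Continuous s)
    (hmono : ∀ x, StrictMono fun z => s (x, z)) {ζ : Z × ℝ → ℝ} (hζ : ∀ q, s (q.1, ζ q) = q.2) :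
    Continuous ζ := by
  refine continuous_iff_continuousAt.2 fun q => tendsto_order.2 ⟨fun a ha => ?_, fun b hb => ?_⟩
  · have : s (q.1, a) < q.2 := (hζ q) ▸ hmono q.1 ha
    filter_upwards [ContinuousAt.eventually_lt (f := fun p : Z × ℝ => s (p.1, a))
      (by fun_prop) continuousAt_snd this] with p hp
    exact (hmono p.1).lt_iff_lt.1 (hp.trans_eq (hζ p).symm)
  · have : q.2 < s (q.1, b) := (hζ q) ▸ hmono q.1 hb
    filter_upwards [ContinuousAt.eventually_lt (g := fun p : Z × ℝ => s (p.1, b))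
      continuousAt_snd (by fun_prop) this] with p hp
    exact (hmono p.1).lt_iff_lt.1 ((hζ p).trans_lt hp)

theorem isHomeomorph_shear {g : Z × ℝ → ℝ} (hg : Continuous g) (hbdd : ∃ A, ∀ p, |g p| ≤ A)
    (hmono : ∀ x, Monotone fun z => g (x, z)) :
    IsHomeomorph fun p : Z × ℝ => (p.1, p.2 + g p) := by
  obtain ⟨A, hA⟩ := hbdd
  have hs : ∀ x, StrictMono fun z => z + g (x, z) := fun x =>
    strictMono_id.add_monotone (hmono x)
  have hsurj : ∀ x, Surjective fun z => z + g (x, z) := fun x =>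
    Continuous.surjective (f := fun z => z + g (x, z)) (by fun_prop)
      (tendsto_atTop_add_right_of_le _ (-A) tendsto_id fun z => (abs_le.1 (hA (x, z))).1)
      (tendsto_atBot_add_right_of_ge _ A tendsto_id fun z => (abs_le.1 (hA (x, z))).2)
  choose ζ hζ using fun q : Z × ℝ => hsurj q.1 q.2
  refine isHomeomorph_iff_exists_inverse.2 ⟨by fun_prop, fun q => (q.1, ζ q), fun p => ?_,
    fun q => Prod.ext rfl (hζ q), continuous_fst.prodMk ?_⟩
  · exact Prod.ext rfl ((hs p.1).injective (hζ (p.1, p.2 + g p)))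
  · exact continuous_of_strictMono_of_apply_eq (s := fun q => q.2 + g q) (by fun_prop) hs
      hζ

end Shear

def timeShear {X : Type*} (F : X × ℝ → ℝ) (p : Icc (0:ℝ) 1 × (X × ℝ)) :
    Icc (0:ℝ) 1 × (X × ℝ) :=
  (p.1, p.2.1, p.2.2 + p.1 * F p.2)

lemma isHomeomorph_timeShear {X : Type*} [TopologicalSpace X] {F : X × ℝ → ℝ}
    (hF : Continuous F) (hbdd : ∃ A, ∀ p, |F p| ≤ A) (hmono : ∀ a, Monotone fun z => F (a, z)) :
    IsHomeomorph (timeShear F) := by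
  obtain ⟨A, hA⟩ := hbdd
  have hshear := isHomeomorph_shear (Z := Icc (0:ℝ) 1 × X)
    (g := fun q => q.1.1 * F (q.1.2, q.2)) (by fun_prop)
    ⟨A, fun q => by
      rw [abs_mul, abs_of_nonneg q.1.1.2.1]
      exact (mul_le_of_le_one_left (abs_nonneg _) q.1.1.2.2).trans (hA _)⟩
    fun q => (hmono q.2).const_mul q.1.2.1
  let e := Homeomorph.prodAssoc (Icc (0:ℝ) 1) X ℝ
  exact (e.isHomeomorph.comp hshear).comp e.symm.isHomeomorph

lemma isHomeomorph_slice {T Y : Type*} [TopologicalSpace T] [TopologicalSpace Y]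
    (Φ : T × Y ≃ₜ T × Y) (hΦ : ∀ p, (Φ p).1 = p.1) (t : T) :
    IsHomeomorph fun y => (Φ (t, y)).2 := by
  have hΦ' : ∀ q, (Φ.symm q).1 = q.1 := fun q => by simpa using (hΦ (Φ.symm q)).symm
  have hslice : ∀ y, (t, (Φ (t, y)).2) = Φ (t, y) := fun y => Prod.ext (hΦ (t, y)).symm rfl
  have hslice' : ∀ y, (t, (Φ.symm (t, y)).2) = Φ.symm (t, y) := fun y =>
    Prod.ext (hΦ' (t, y)).symm rfl
  refine isHomeomorph_iff_exists_inverse.2 ⟨by fun_prop, fun y => (Φ.symm (t, y)).2,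
    fun y => ?_, fun y => ?_, by fun_prop⟩
  · simp only [hslice, Homeomorph.symm_apply_apply]
  · simp only [hslice', Homeomorph.apply_symm_apply]

lemma continuousOn_invFunOn_image {α β : Type*} [TopologicalSpace α] [TopologicalSpace β]
    [T2Space β] [Nonempty α] {k : Set α} {φ : α → β} (hk : IsCompact k) (hφ : ContinuousOn φ k)
    (hinj : InjOn φ k) : ContinuousOn (invFunOn φ k) (φ '' k) := by
  refine continuousOn_iff_isClosed.2 fun C hC => ⟨φ '' (k ∩ C), ?_, ?_⟩
  · exact ((hk.inter_right hC).image_of_continuousOn (hφ.mono inter_subset_left)).isClosed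
  · ext u
    constructor
    · rintro ⟨hu, x, hx, rfl⟩
      rw [mem_preimage, hinj.leftInvOn_invFunOn hx] at hu
      exact ⟨⟨x, ⟨hx, hu⟩, rfl⟩, x, hx, rfl⟩
    · rintro ⟨⟨x, ⟨hx, hxC⟩, rfl⟩, -⟩
      exact ⟨by rwa [mem_preimage, hinj.leftInvOn_invFunOn hx], x, hx, rfl⟩

theorem exists_vertical_isotopy {X : Type*} [MetricSpace X] {k : Set (X × ℝ)} (hk : IsCompact k)
    {φ : X × ℝ → X × ℝ} (hφ : ContinuousOn φ k) (hfst : ∀ x ∈ k, (φ x).1 = x.1)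
    (hord : ∀ x ∈ k, ∀ y ∈ k, x.1 = y.1 → (x.2 ≤ y.2 ↔ (φ x).2 ≤ (φ y).2)) :
    ∃ H : Icc (0:ℝ) 1 × (X × ℝ) → X × ℝ, Continuous H ∧ (∀ t, IsHomeomorph fun x => H (t, x)) ∧
      (∀ x, H (0, x) = x) ∧ ∀ x ∈ k, H (1, x) = φ x := by
  rcases k.eq_empty_or_nonempty with rfl | ⟨x₀, -⟩
  · exact ⟨Prod.snd, continuous_snd, fun _ => .id, fun _ => rfl, by simp⟩
  have : Nonempty (X × ℝ) := ⟨x₀⟩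
  have hinj : InjOn φ k := fun x hx y hy h => by
    have h₁ : x.1 = y.1 := by rw [← hfst x hx, h, hfst y hy]
    have h₂ := congrArg Prod.snd h
    exact Prod.ext h₁
      (le_antisymm ((hord x hx y hy h₁).2 h₂.le) ((hord y hy x hx h₁.symm).2 h₂.ge))
  have hψ : ∀ x ∈ k, invFunOn φ k (φ x) = x := fun x hx => hinj.leftInvOn_invFunOn hx
  obtain ⟨F₁, hF₁, hF₁k, hF₁m, hF₁b⟩ := exists_continuous_monotone_extension hk
    (continuous_snd.comp_continuousOn hφ) fun x hx y hy h => (hord x hx y hy h).1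
  obtain ⟨F₂, hF₂, hF₂k, hF₂m, hF₂b⟩ := exists_continuous_monotone_extension
    (f := fun u => (invFunOn φ k u).2) (hk.image_of_continuousOn hφ)
    (continuous_snd.comp_continuousOn (continuousOn_invFunOn_image hk hφ hinj)) (by
      rintro _ ⟨x, hx, rfl⟩ _ ⟨y, hy, rfl⟩ h
      rw [hfst x hx, hfst y hy] at h
      simpa only [hψ x hx, hψ y hy] using (hord x hx y hy h).2)
  have hS₂ := isHomeomorph_timeShear hF₂ hF₂b hF₂m
  let Φ := (isHomeomorph_timeShear hF₁ hF₁b hF₁m).homeomorph.trans hS₂.homeomorph.symm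
  have hΦ : ∀ p, timeShear F₂ (Φ p) = timeShear F₁ p := fun p =>
    hS₂.homeomorph.apply_symm_apply _
  have hΦ_eq : ∀ p q, timeShear F₁ p = timeShear F₂ q → Φ p = q := fun p q h =>
    hS₂.injective ((hΦ p).trans h)
  refine ⟨fun p => (Φ p).2, by fun_prop, isHomeomorph_slice Φ fun p => ?_,
    fun x => congrArg Prod.snd (hΦ_eq (0, x) (0, x) ?_),
    fun x hx => congrArg Prod.snd (hΦ_eq (1, x) (1, φ x) ?_)⟩
  · simpa only [timeShear] using congrArg Prod.fst (hΦ p)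
  · simp [timeShear]
  · simp only [timeShear, Set.Icc.coe_one, one_mul, hF₁k hx, hF₂k (mem_image_of_mem φ hx),
      hψ x hx, hfst x hx, add_comm, comp_apply]

lemma le_iff_le_of_mul_sub_pos {a b c d : ℝ} (h : 0 < (a - b) * (c - d)) : a ≤ b ↔ c ≤ d := by
  rcases mul_pos_iff.1 h with ⟨h₁, h₂⟩ | ⟨h₁, h₂⟩ <;> constructor <;> intro <;> linarith

lemma IsPolygonalKnot.isCompact {k : Set E3} (hk : IsPolygonalKnot k) : IsCompact k := by
  obtain ⟨-, S, rfl⟩ := hk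
  exact S.finite_toSet.isCompact_biUnion fun p _ =>
    convexHull_pair (𝕜 := ℝ) p.1 p.2 ▸ (toFinite _).isCompact_convexHull ℝ

end

theorem same_diagram_isotopic_general (k₁ k₂ : Set E3)
    (h₁ : IsPolygonalKnot k₁)
    (φ : E3 → E3)
    (hφbij : Set.BijOn φ k₁ k₂)
    (hφcont : ContinuousOn φ k₁)
    (hproj : ∀ x ∈ k₁, projXY (φ x) = projXY x)
    (hheight : ∀ x ∈ k₁, ∀ y ∈ k₁, x ≠ y → projXY x = projXY y →
      0 < (height x - height y) * (height (φ x) - height (φ y))) :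
    AmbientIsotopic k₁ k₂ := by
  have hord : ∀ x ∈ k₁, ∀ y ∈ k₁, projXY x = projXY y →
      (height x ≤ height y ↔ height (φ x) ≤ height (φ y)) := fun x hx y hy hxy => by
    rcases eq_or_ne x y with rfl | hne
    · exact iff_of_true le_rfl le_rfl
    · exact le_iff_le_of_mul_sub_pos (hheight x hx y hy hne hxy)
  -- `e.symm x = (projXY x, height x)`
  let e := Homeomorph.prodAssoc ℝ ℝ ℝ
  obtain ⟨H, hH, hHt, hH0, hH1⟩ := exists_vertical_isotopy (k := e ⁻¹' k₁)
    (φ := e.symm ∘ φ ∘ e) (e.isCompact_preimage.2 h₁.isCompact)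
    (e.symm.continuous.comp_continuousOn
      (hφcont.comp e.continuous.continuousOn (mapsTo_preimage e k₁)))
    (fun x hx => hproj (e x) hx) fun x hx y hy hxy => hord (e x) hx (e y) hy hxy
  refine ⟨fun p => e (H (p.1, e.symm p.2)), by fun_prop,
    fun t => e.isHomeomorph.comp ((hHt t).comp e.symm.isHomeomorph), fun x => by simp [hH0], ?_⟩
  rw [← hφbij.image_eq]
  exact image_congr fun x hx => by simp [hH1 (e.symm x) (by simpa using hx)]

/-- Proposition: two polygonal knots admitting a polygonal homeomorphism that preserves the
projection to the plane and the relative heights over each multiple point of the projection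
are ambient isotopic.  The homeomorphism is given as a map `φ : ℝ³ → ℝ³` that restricts to a
homeomorphism of `k₁` onto `k₂` (continuity of the inverse is automatic by compactness), and
polygonality of `φ` means some subdivision of `k₁` into segments is mapped by `φ` to segments
contained in `k₂`. -/
theorem same_diagram_isotopic (k₁ k₂ : Set E3)
    (h₁ : IsPolygonalKnot k₁) (h₂ : IsPolygonalKnot k₂)
    (φ : E3 → E3)
    (hφbij : Set.BijOn φ k₁ k₂)
    (hφcont : ContinuousOn φ k₁)
    (hφpoly : ∃ S : Finset (E3 × E3),
      k₁ = ⋃ p ∈ S, segment ℝ p.1 p.2 ∧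
      ∀ p ∈ S, ∃ q₁ q₂ : E3, φ '' segment ℝ p.1 p.2 = segment ℝ q₁ q₂)
    (hproj : ∀ x ∈ k₁, projXY (φ x) = projXY x)
    (hheight : ∀ x ∈ k₁, ∀ y ∈ k₁, x ≠ y → projXY x = projXY y →
      0 < (height x - height y) * (height (φ x) - height (φ y))) :
    AmbientIsotopic k₁ k₂ :=
  same_diagram_isotopic_general k₁ k₂ h₁ φ hφbij hφcont hproj hheight
end

section
/- Let μ > 2 and let C_μ = {x ∈ ℝ : t_μⁿ(x) ∈ [0,1] for every integer n ≥ 0}. Then for every x ∈ C_μ and every n ≥ 0 one has t_μⁿ(x) ≠ 1/2, and the itinerary map s : C_μ → {0,1}^ℕ defined by s(x)(n) = 0 if t_μⁿ(x) < 1/2 and s(x)(n) = 1 if t_μⁿ(x) > 1/2 is a bijection. -/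
open Set

/-- The tent map `t_μ`: `t_μ(z) = μz` for `z ≤ 1/2` and `t_μ(z) = μ(1-z)` for `z ≥ 1/2`. -/
noncomputable def tentMap (μ : ℝ) : ℝ → ℝ := fun z =>
  if z ≤ 1 / 2 then μ * z else μ * (1 - z)

/-- The invariant Cantor set of the tent map: the points whose whole forward orbit
stays in `[0,1]`. -/
def tentCantorSet (μ : ℝ) : Set ℝ :=
  {x : ℝ | ∀ n : ℕ, (tentMap μ)^[n] x ∈ Icc (0:ℝ) 1}

/-- The itinerary map: `s(x)(n) = 0` if `t_μⁿ(x) < 1/2` and `s(x)(n) = 1` otherwise. -/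
noncomputable def itinerary (μ : ℝ) : ℝ → ℕ → ℕ := fun x n =>
  if (tentMap μ)^[n] x < 1 / 2 then 0 else 1

/-!
The orbit of a point of `C_μ` never meets `1/2`, because `t_μ(1/2) = μ/2 > 1`.
Two points of `C_μ` with the same itinerary stay on the same side of `1/2` at every step, where
`t_μ` multiplies distances by `μ`; as both orbits stay in `[0,1]`, the points coincide. Conversely,
the inverse branches `y ↦ y/μ` and `y ↦ 1 - y/μ` map `[0,1]` into `[0,1/2)` and `(1/2,1]` and
contract by `1/μ`, so composing them along a symbol sequence `u` converges to a point whose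
itinerary is `u`.
-/

open Filter Topology

section

variable {μ : ℝ}

theorem tentMap_of_le_half {z : ℝ} (h : z ≤ 1 / 2) : tentMap μ z = μ * z := if_pos h

theorem tentMap_of_half_le {z : ℝ} (h : 1 / 2 ≤ z) : tentMap μ z = μ * (1 - z) := by
  rcases h.eq_or_lt with rfl | h
  · rw [tentMap_of_le_half le_rfl]; ring
  · exact if_neg h.not_ge

theorem abs_tentMap_sub_tentMap {x y : ℝ} (h : x < 1 / 2 ↔ y < 1 / 2) :
    |tentMap μ x - tentMap μ y| = |μ| * |x - y| := by
  rcases lt_or_ge x (1 / 2) with hx | hx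
  · rw [tentMap_of_le_half hx.le, tentMap_of_le_half (h.1 hx).le, ← mul_sub, abs_mul]
  · have hy : 1 / 2 ≤ y := not_lt.1 (mt h.2 hx.not_gt)
    rw [tentMap_of_half_le hx, tentMap_of_half_le hy, ← mul_sub, abs_mul, abs_sub_comm]
    ring_nf

theorem itinerary_eq_zero_or_eq_one (μ x : ℝ) (n : ℕ) :
    itinerary μ x n = 0 ∨ itinerary μ x n = 1 := by
  unfold itinerary
  split_ifs <;> simp

theorem itinerary_eq_iff {x y : ℝ} {n : ℕ} :
    itinerary μ x n = itinerary μ y n ↔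
      ((tentMap μ)^[n] x < 1 / 2 ↔ (tentMap μ)^[n] y < 1 / 2) := by
  unfold itinerary
  split_ifs with hx hy hy <;> simp only [hx, hy] <;> decide

theorem abs_iterate_sub_of_itinerary_eq {x y : ℝ} {n : ℕ}
    (h : ∀ k < n, itinerary μ x k = itinerary μ y k) :
    |(tentMap μ)^[n] x - (tentMap μ)^[n] y| = |μ| ^ n * |x - y| := by
  induction n with
  | zero => simp
  | succ n ih =>
    rw [Function.iterate_succ_apply', Function.iterate_succ_apply',
      abs_tentMap_sub_tentMap (itinerary_eq_iff.1 (h n n.lt_succ_self)),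
      ih fun k hk => h k (hk.trans n.lt_succ_self)]
    ring

theorem iterate_ne_half_of_mem_tentCantorSet (hμ : 2 < μ) {x : ℝ} (hx : x ∈ tentCantorSet μ)
    (n : ℕ) : (tentMap μ)^[n] x ≠ 1 / 2 := by
  intro h
  have h1 := (hx (n + 1)).2
  rw [Function.iterate_succ_apply', h, tentMap_of_le_half le_rfl] at h1
  linarith

theorem injOn_itinerary (hμ : 1 < μ) : InjOn (itinerary μ) (tentCantorSet μ) := by
  intro x hx y hy hxy
  have hbound (n : ℕ) : |x - y| ≤ μ⁻¹ ^ n := by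
    have hle : |(tentMap μ)^[n] x - (tentMap μ)^[n] y| ≤ 1 :=
      abs_sub_le_of_nonneg_of_le (hx n).1 (hx n).2 (hy n).1 (hy n).2
    rw [abs_iterate_sub_of_itinerary_eq fun k _ => congrFun hxy k,
      abs_of_pos (by linarith : 0 < μ)] at hle
    rw [inv_pow, ← one_div, le_div_iff₀ (by positivity)]
    linarith
  have hlim : Tendsto (fun n : ℕ => μ⁻¹ ^ n) atTop (𝓝 0) :=
    tendsto_pow_atTop_nhds_zero_of_lt_one (by positivity) (inv_lt_one_of_one_lt₀ hμ)
  exact sub_eq_zero.1 (abs_nonpos_iff.1 (ge_of_tendsto' hlim hbound))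

noncomputable def tentBranch (μ : ℝ) (i : ℕ) (y : ℝ) : ℝ :=
  if i = 0 then y / μ else 1 - y / μ

theorem continuous_tentBranch (i : ℕ) : Continuous (tentBranch μ i) := by
  unfold tentBranch
  split_ifs <;> fun_prop

theorem abs_tentBranch_sub (i : ℕ) (y y' : ℝ) :
    |tentBranch μ i y - tentBranch μ i y'| = |y - y'| / |μ| := by
  unfold tentBranch
  split_ifs
  · rw [← sub_div, abs_div]
  · rw [sub_sub_sub_cancel_left, ← sub_div, abs_div, abs_sub_comm]

theorem tentBranch_mem_Icc (hμ : 1 ≤ μ) (i : ℕ) {y : ℝ} (hy : y ∈ Icc (0 : ℝ) 1) :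
    tentBranch μ i y ∈ Icc (0 : ℝ) 1 := by
  have h0 : 0 ≤ y / μ := div_nonneg hy.1 (by linarith)
  have h1 : y / μ ≤ 1 := div_le_one_of_le₀ (hy.2.trans hμ) (by linarith)
  unfold tentBranch
  split_ifs <;> constructor <;> linarith

theorem tentBranch_lt_half_iff (hμ : 2 < μ) (i : ℕ) {y : ℝ} (hy : y ≤ 1) :
    tentBranch μ i y < 1 / 2 ↔ i = 0 := by
  have h : y / μ < 1 / 2 := by rw [div_lt_iff₀ (by linarith)]; linarith
  unfold tentBranch
  split_ifs with hi
  · simp only [h, hi]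
  · simp only [hi, iff_false, not_lt]
    linarith

theorem tentMap_tentBranch (hμ : 2 < μ) (i : ℕ) {y : ℝ} (hy : y ≤ 1) :
    tentMap μ (tentBranch μ i y) = y := by
  have hμ0 : μ ≠ 0 := by positivity
  by_cases hi : i = 0
  · rw [tentMap_of_le_half ((tentBranch_lt_half_iff hμ i hy).2 hi).le, tentBranch, if_pos hi]
    field_simp
  · rw [tentMap_of_half_le (not_lt.1 (mt (tentBranch_lt_half_iff hμ i hy).1 hi)), tentBranch,
      if_neg hi]
    field_simp
    ring

noncomputable def tentBranchComp (μ : ℝ) (u : ℕ → ℕ) : ℕ → ℝ → ℝ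
  | 0 => id
  | n + 1 => tentBranchComp μ u n ∘ tentBranch μ (u n)

theorem tentBranchComp_mem_Icc (hμ : 1 ≤ μ) (u : ℕ → ℕ) (n : ℕ) {y : ℝ}
    (hy : y ∈ Icc (0 : ℝ) 1) : tentBranchComp μ u n y ∈ Icc (0 : ℝ) 1 := by
  induction n generalizing y with
  | zero => exact hy
  | succ n ih => exact ih (tentBranch_mem_Icc hμ (u n) hy)

theorem abs_tentBranchComp_sub (u : ℕ → ℕ) (n : ℕ) (y y' : ℝ) :
    |tentBranchComp μ u n y - tentBranchComp μ u n y'| = |y - y'| / |μ| ^ n := by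
  induction n generalizing y y' with
  | zero => simp [tentBranchComp]
  | succ n ih =>
    simp only [tentBranchComp, Function.comp_apply]
    rw [ih, abs_tentBranch_sub, div_div, pow_succ']

theorem tentBranchComp_succ' (u : ℕ → ℕ) (n : ℕ) :
    tentBranchComp μ u (n + 1) = tentBranch μ (u 0) ∘ tentBranchComp μ (fun k => u (k + 1)) n := by
  induction n with
  | zero => rfl
  | succ n ih => rw [tentBranchComp, ih]; rfl

theorem cauchySeq_tentBranchComp (hμ : 1 < μ) (u : ℕ → ℕ) :
    CauchySeq fun n => tentBranchComp μ u n 0 := by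
  refine cauchySeq_of_le_geometric μ⁻¹ 1 (inv_lt_one_of_one_lt₀ hμ) fun n => ?_
  have hb := tentBranch_mem_Icc hμ.le (u n) (left_mem_Icc.2 zero_le_one)
  rw [Real.dist_eq, tentBranchComp, Function.comp_apply, abs_tentBranchComp_sub,
    abs_of_pos (by linarith : 0 < μ), zero_sub, abs_neg, abs_of_nonneg hb.1, one_mul, inv_pow,
    div_eq_mul_inv]
  exact mul_le_of_le_one_left (by positivity) hb.2

noncomputable def tentPoint (μ : ℝ) (u : ℕ → ℕ) : ℝ :=
  limUnder atTop fun n => tentBranchComp μ u n 0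

theorem tendsto_tentPoint (hμ : 1 < μ) (u : ℕ → ℕ) :
    Tendsto (fun n => tentBranchComp μ u n 0) atTop (𝓝 (tentPoint μ u)) :=
  (cauchySeq_tentBranchComp hμ u).tendsto_limUnder

theorem tentPoint_mem_Icc (hμ : 1 < μ) (u : ℕ → ℕ) : tentPoint μ u ∈ Icc (0 : ℝ) 1 :=
  isClosed_Icc.mem_of_tendsto (tendsto_tentPoint hμ u) <| .of_forall fun n =>
    tentBranchComp_mem_Icc hμ.le u n (left_mem_Icc.2 zero_le_one)

theorem tentPoint_eq_tentBranch (hμ : 1 < μ) (u : ℕ → ℕ) :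
    tentPoint μ u = tentBranch μ (u 0) (tentPoint μ fun k => u (k + 1)) := by
  refine tendsto_nhds_unique ((tendsto_tentPoint hμ u).comp (tendsto_add_atTop_nat 1)) ?_
  simp only [Function.comp_def, tentBranchComp_succ', Function.comp_apply]
  exact ((continuous_tentBranch (u 0)).tendsto _).comp (tendsto_tentPoint hμ _)

theorem tentMap_tentPoint (hμ : 2 < μ) (u : ℕ → ℕ) :
    tentMap μ (tentPoint μ u) = tentPoint μ fun k => u (k + 1) := by
  rw [tentPoint_eq_tentBranch (by linarith) u]
  exact tentMap_tentBranch hμ _ (tentPoint_mem_Icc (by linarith) _).2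

theorem iterate_tentPoint (hμ : 2 < μ) (u : ℕ → ℕ) (n : ℕ) :
    (tentMap μ)^[n] (tentPoint μ u) = tentPoint μ fun k => u (k + n) := by
  induction n generalizing u with
  | zero => rfl
  | succ n ih =>
    rw [Function.iterate_succ_apply, tentMap_tentPoint hμ, ih]
    simp only [add_assoc]

theorem tentPoint_mem_tentCantorSet (hμ : 2 < μ) (u : ℕ → ℕ) : tentPoint μ u ∈ tentCantorSet μ :=
  fun n => iterate_tentPoint hμ u n ▸ tentPoint_mem_Icc (by linarith) _

theorem itinerary_tentPoint (hμ : 2 < μ) {u : ℕ → ℕ} (hu : ∀ n, u n = 0 ∨ u n = 1) :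
    itinerary μ (tentPoint μ u) = u := by
  funext n
  have hside : (tentMap μ)^[n] (tentPoint μ u) < 1 / 2 ↔ u n = 0 := by
    rw [iterate_tentPoint hμ, tentPoint_eq_tentBranch (by linarith), zero_add,
      tentBranch_lt_half_iff hμ _ (tentPoint_mem_Icc (by linarith) _).2]
  simp only [itinerary, hside]
  rcases hu n with h | h <;> simp [h]

theorem surjOn_itinerary (hμ : 2 < μ) :
    SurjOn (itinerary μ) (tentCantorSet μ) {u : ℕ → ℕ | ∀ n, u n = 0 ∨ u n = 1} :=
  fun u hu => ⟨tentPoint μ u, tentPoint_mem_tentCantorSet hμ u, itinerary_tentPoint hμ hu⟩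

end

/-- For `μ > 2`, no point of the invariant set ever hits `1/2`, and the itinerary map is a
bijection from the invariant set onto the full shift space `{0,1}^ℕ`. -/
theorem itinerary_bijective (μ : ℝ) (hμ : 2 < μ) :
    (∀ x ∈ tentCantorSet μ, ∀ n : ℕ, (tentMap μ)^[n] x ≠ 1 / 2) ∧
    Set.BijOn (itinerary μ) (tentCantorSet μ) {u : ℕ → ℕ | ∀ n, u n = 0 ∨ u n = 1} :=
  ⟨fun _ hx => iterate_ne_half_of_mem_tentCantorSet hμ hx,
    fun x _ => itinerary_eq_zero_or_eq_one μ x, injOn_itinerary (by linarith), surjOn_itinerary hμ⟩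
end
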